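/- arXiv:1709.09569 — 2 statements merged into one kernel-verified Lean document; each statement's English description precedes it below -/
import Mathlib

section
/- For any two system-optimal flows f and g on a parallel-link network, the marginal cost cₑ'(fₑ) = lₑ(fₑ) + fₑ·lₑ'(fₑ) equals cₑ'(gₑ) for every link e. -/
/-!
Along the segment between two system-optimal flows the total cost is constant, since the
feasible set is convex and the cost is convex. A sum of convex functions that is affine on a
segment is affine termwise, so each link cost `x ↦ lₑ(x)·x` is affine between `fₑ` and `gₑ`.
A differentiable function that is affine on a nondegenerate segment has the slope of the
segment as its derivative at both endpoints.
-/

open Finset Set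

lemma deriv_eq_of_eqOn_affine {c : ℝ → ℝ} {s : Set ℝ} {m k x : ℝ}
    (hs : UniqueDiffWithinAt ℝ s x) (hx : x ∈ s) (hc : DifferentiableAt ℝ c x)
    (heq : EqOn c (fun y => m * y + k) s) : deriv c x = m := by
  have haff : HasDerivWithinAt c m s x := by
    refine HasDerivWithinAt.congr ?_ heq (heq hx)
    simpa using ((hasDerivAt_id x).const_mul m).add_const k |>.hasDerivWithinAt
  exact hs.eq_deriv s hc.hasDerivAt.hasDerivWithinAt haff

lemma deriv_eq_deriv_of_affine_on_segment {c : ℝ → ℝ} {a b : ℝ}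
    (ha : DifferentiableAt ℝ c a) (hb : DifferentiableAt ℝ c b)
    (haff : ∀ s t : ℝ, 0 ≤ s → 0 ≤ t → s + t = 1 → c (s * a + t * b) = s * c a + t * c b) :
    deriv c a = deriv c b := by
  rcases eq_or_ne a b with rfl | hab
  · rfl
  have heq : EqOn c (fun y => slope c a b * y + (c a - slope c a b * a)) (segment ℝ a b) := by
    rintro _ ⟨s, t, hs, ht, hst, rfl⟩
    obtain rfl : s = 1 - t := by linarith
    simp only [smul_eq_mul, haff _ t hs ht hst, slope_def_field]
    field_simp
    ring
  have huniq : UniqueDiffOn ℝ (segment ℝ a b) := by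
    rw [segment_eq_uIcc]
    exact uniqueDiffOn_Icc (inf_lt_sup.2 hab)
  rw [deriv_eq_of_eqOn_affine (huniq a (left_mem_segment ℝ a b)) (left_mem_segment ℝ a b) ha heq,
    deriv_eq_of_eqOn_affine (huniq b (right_mem_segment ℝ a b)) (right_mem_segment ℝ a b) hb heq]

lemma sum_convexOn_apply_combo_eq_of_isMinOn {E : Type*} [Fintype E] {φ : E → ℝ → ℝ}
    {D : Set ℝ} {K : Set (E → ℝ)} {f g : E → ℝ} {s t : ℝ}
    (hK : Convex ℝ K) (hφ : ∀ e, ConvexOn ℝ D (φ e)) (hKD : ∀ h ∈ K, ∀ e, h e ∈ D)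
    (hfK : f ∈ K) (hgK : g ∈ K)
    (hf : IsMinOn (fun h => ∑ e, φ e (h e)) K f) (hg : IsMinOn (fun h => ∑ e, φ e (h e)) K g)
    (hs : 0 ≤ s) (ht : 0 ≤ t) (hst : s + t = 1) (e : E) :
    φ e (s * f e + t * g e) = s * φ e (f e) + t * φ e (g e) := by
  have hle : ∀ e ∈ Finset.univ, φ e (s * f e + t * g e) ≤ s * φ e (f e) + t * φ e (g e) :=
    fun e _ => (hφ e).2 (hKD f hfK e) (hKD g hgK e) hs ht hst
  have hfg : ∑ e, φ e (f e) = ∑ e, φ e (g e) := le_antisymm (hf hgK) (hg hfK)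
  have hge : ∑ e, (s * φ e (f e) + t * φ e (g e)) ≤ ∑ e, φ e (s * f e + t * g e) :=
    calc ∑ e, (s * φ e (f e) + t * φ e (g e))
        = s * ∑ e, φ e (f e) + t * ∑ e, φ e (g e) := by simp only [sum_add_distrib, mul_sum]
      _ = ∑ e, φ e (f e) := by rw [← hfg, ← add_mul, hst, one_mul]
      _ ≤ ∑ e, φ e (s * f e + t * g e) := hf (hK hfK hgK hs ht hst)
  exact (sum_eq_sum_iff_of_le hle).1 ((sum_le_sum hle).antisymm hge) e (mem_univ e)

def feasibleFlows (E : Type*) [Fintype E] (r : ℝ) : Set (E → ℝ) :=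
  {h | (∀ e, 0 ≤ h e) ∧ ∑ e, h e = r}

lemma convex_feasibleFlows (E : Type*) [Fintype E] (r : ℝ) : Convex ℝ (feasibleFlows E r) := by
  rintro f ⟨hf0, hfr⟩ g ⟨hg0, hgr⟩ s t hs ht hst
  refine ⟨fun e => ?_, ?_⟩
  · simp only [Pi.add_apply, Pi.smul_apply, smul_eq_mul]
    exact add_nonneg (mul_nonneg hs (hf0 e)) (mul_nonneg ht (hg0 e))
  · simp only [Pi.add_apply, Pi.smul_apply, smul_eq_mul, sum_add_distrib, ← mul_sum, hfr, hgr,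
      ← add_mul, hst, one_mul]

lemma deriv_mul_id_eq {φ : ℝ → ℝ} {x : ℝ} (hφ : DifferentiableAt ℝ φ x) :
    deriv (fun y => φ y * y) x = φ x + x * deriv φ x := by
  rw [deriv_fun_mul hφ differentiableAt_fun_id, deriv_id'']
  ring

theorem SO_flows_equal_marginal_cost_general {E : Type*} [Fintype E]
    (l : E → ℝ → ℝ)
    (hldiff : ∀ e, Differentiable ℝ (l e))
    (hconv : ∀ e, ConvexOn ℝ (Set.Ici 0) (fun x => l e x * x))
    (r : ℝ) (f g : E → ℝ)
    (hf0 : ∀ e, 0 ≤ f e) (hg0 : ∀ e, 0 ≤ g e)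
    (hfr : ∑ e, f e = r) (hgr : ∑ e, g e = r)
    (hfSO : ∀ h : E → ℝ, (∀ e, 0 ≤ h e) → ∑ e, h e = r →
      ∑ e, l e (f e) * f e ≤ ∑ e, l e (h e) * h e)
    (hgSO : ∀ h : E → ℝ, (∀ e, 0 ≤ h e) → ∑ e, h e = r →
      ∑ e, l e (g e) * g e ≤ ∑ e, l e (h e) * h e) :
    ∀ e, l e (f e) + f e * deriv (l e) (f e) = l e (g e) + g e * deriv (l e) (g e) := by
  intro e
  have hcost_affine : ∀ s t : ℝ, 0 ≤ s → 0 ≤ t → s + t = 1 →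
      l e (s * f e + t * g e) * (s * f e + t * g e) =
        s * (l e (f e) * f e) + t * (l e (g e) * g e) :=
    fun s t hs ht hst => sum_convexOn_apply_combo_eq_of_isMinOn (convex_feasibleFlows E r) hconv
      (fun _ hh e => hh.1 e) ⟨hf0, hfr⟩ ⟨hg0, hgr⟩ (fun h hh => hfSO h hh.1 hh.2)
      (fun h hh => hgSO h hh.1 hh.2) hs ht hst e
  have hdiff : Differentiable ℝ (fun x => l e x * x) := (hldiff e).mul differentiable_id
  rw [← deriv_mul_id_eq (hldiff e _), ← deriv_mul_id_eq (hldiff e _)]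
  exact deriv_eq_deriv_of_affine_on_segment (hdiff _) (hdiff _) hcost_affine

/-- Any two system-optimal flows on a parallel-link network induce the same
marginal cost `cₑ'(fₑ) = lₑ(fₑ) + fₑ·lₑ'(fₑ)` on every link. -/
theorem SO_flows_equal_marginal_cost {E : Type*} [Fintype E]
    (l : E → ℝ → ℝ)
    (hl0 : ∀ e x, 0 ≤ l e x)
    (hldiff : ∀ e, Differentiable ℝ (l e))
    (hlderiv_cont : ∀ e, Continuous (deriv (l e)))
    (hlmono : ∀ e, Monotone (l e))
    (hconv : ∀ e, ConvexOn ℝ (Set.Ici 0) (fun x => l e x * x))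
    (r : ℝ) (f g : E → ℝ)
    (hf0 : ∀ e, 0 ≤ f e) (hg0 : ∀ e, 0 ≤ g e)
    (hfr : ∑ e, f e = r) (hgr : ∑ e, g e = r)
    (hfSO : ∀ h : E → ℝ, (∀ e, 0 ≤ h e) → ∑ e, h e = r →
      ∑ e, l e (f e) * f e ≤ ∑ e, l e (h e) * h e)
    (hgSO : ∀ h : E → ℝ, (∀ e, 0 ≤ h e) → ∑ e, h e = r →
      ∑ e, l e (g e) * g e ≤ ∑ e, l e (h e) * h e) :
    ∀ e, l e (f e) + f e * deriv (l e) (f e) = l e (g e) + g e * deriv (l e) (g e) :=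
  SO_flows_equal_marginal_cost_general l hldiff hconv r f g hf0 hg0 hfr hgr hfSO hgSO
end

section
/- On a parallel-link network with continuous non-decreasing latencies, a feasible flow f is a user equilibrium if and only if f minimizes the Beckmann potential Φ(f) = ∑ₑ ∫₀^{fₑ} lₑ(u) du over feasible flows. -/
/-- For a continuous monotone function, `(b - a) * l a ≤ ∫_a^b l`. -/
private lemma int_ge_left {l : ℝ → ℝ} (hc : Continuous l) (hm : Monotone l) (a b : ℝ) :
    (b - a) * l a ≤ ∫ u in a..b, l u := by
  rcases le_total a b with h | h
  · have h1 : (∫ _ in a..b, l a) ≤ ∫ u in a..b, l u :=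
      intervalIntegral.integral_mono_on h intervalIntegrable_const
        (hc.intervalIntegrable _ _) (fun x hx => hm hx.1)
    rwa [intervalIntegral.integral_const, smul_eq_mul] at h1
  · have h1 : (∫ u in b..a, l u) ≤ ∫ _ in b..a, l a :=
      intervalIntegral.integral_mono_on h (hc.intervalIntegrable _ _)
        intervalIntegrable_const (fun x hx => hm hx.2)
    rw [intervalIntegral.integral_const, smul_eq_mul] at h1
    have h2 : (∫ u in a..b, l u) = -∫ u in b..a, l u := intervalIntegral.integral_symm b a
    rw [h2]; linarith

/-- For a continuous monotone function and `a ≤ b`, `∫_a^b l ≤ (b - a) * l b`. -/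
private lemma int_le_right {l : ℝ → ℝ} (hc : Continuous l) (hm : Monotone l) {a b : ℝ}
    (h : a ≤ b) : (∫ u in a..b, l u) ≤ (b - a) * l b := by
  have h1 : (∫ u in a..b, l u) ≤ ∫ _ in a..b, l b :=
    intervalIntegral.integral_mono_on h (hc.intervalIntegrable _ _)
      intervalIntegrable_const (fun x hx => hm hx.2)
  rwa [intervalIntegral.integral_const, smul_eq_mul] at h1

/-- Beckmann characterization: on a parallel-link network with continuous
non-decreasing latencies, a feasible flow is a user equilibrium iff it minimizes
the Beckmann potential `Φ(f) = ∑ₑ ∫₀^{fₑ} lₑ(u) du` over feasible flows. -/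
theorem UE_iff_beckmann_min {E : Type*} [Fintype E]
    (l : E → ℝ → ℝ)
    (hl0 : ∀ e x, 0 ≤ l e x)
    (hlcont : ∀ e, Continuous (l e))
    (hlmono : ∀ e, Monotone (l e))
    (r : ℝ) (hr : 0 < r) (f : E → ℝ)
    (hf0 : ∀ e, 0 ≤ f e) (hfr : ∑ e, f e = r) :
    (∀ e, 0 < f e → ∀ e', l e (f e) ≤ l e' (f e')) ↔
    (∀ g : E → ℝ, (∀ e, 0 ≤ g e) → ∑ e, g e = r →
      ∑ e, (∫ u in (0:ℝ)..(f e), l e u) ≤ ∑ e, (∫ u in (0:ℝ)..(g e), l e u)) := by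
  classical
  constructor
  · -- UE ⇒ minimizer
    intro hUE g hg0 hgr
    obtain ⟨e0, he0⟩ : ∃ e, 0 < f e := by
      by_contra h
      push_neg at h
      have : ∑ e, f e ≤ 0 := Finset.sum_nonpos (fun e _ => h e)
      rw [hfr] at this; linarith
    set L := l e0 (f e0) with hL
    have hLle : ∀ e, L ≤ l e (f e) := hUE e0 he0
    have key : ∀ e, (g e - f e) * L ≤
        (∫ u in (0:ℝ)..(g e), l e u) - (∫ u in (0:ℝ)..(f e), l e u) := by
      intro e
      have hadd : (∫ u in (0:ℝ)..(f e), l e u) + (∫ u in (f e)..(g e), l e u)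
          = ∫ u in (0:ℝ)..(g e), l e u :=
        intervalIntegral.integral_add_adjacent_intervals
          ((hlcont e).intervalIntegrable _ _) ((hlcont e).intervalIntegrable _ _)
      have h1 : (g e - f e) * l e (f e) ≤ ∫ u in (f e)..(g e), l e u :=
        int_ge_left (hlcont e) (hlmono e) _ _
      have h2 : (g e - f e) * L ≤ (g e - f e) * l e (f e) := by
        rcases (hf0 e).lt_or_eq with hfe | hfe
        · have := le_antisymm (hUE e hfe e0) (hLle e)
          rw [this]
        · have hge : 0 ≤ g e - f e := by rw [← hfe]; simpa using hg0 e
          exact mul_le_mul_of_nonneg_left (hLle e) hge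
      linarith
    have hsum := Finset.sum_le_sum (fun e (_ : e ∈ Finset.univ) => key e)
    rw [Finset.sum_sub_distrib] at hsum
    have hzero : ∑ e, (g e - f e) * L = 0 := by
      rw [← Finset.sum_mul, Finset.sum_sub_distrib, hfr, hgr, sub_self, zero_mul]
    rw [hzero] at hsum
    linarith
  · -- minimizer ⇒ UE
    intro hmin e he e'
    by_contra hlt
    push_neg at hlt
    have hne : e ≠ e' := by
      intro h; rw [← h] at hlt; exact lt_irrefl _ hlt
    -- continuity: find ε > 0 with ε ≤ f e and l e' (f e' + ε) < l e (f e - ε)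
    have hφ : Continuous (fun t : ℝ => l e (f e - t) - l e' (f e' + t)) := by
      exact ((hlcont e).comp (by continuity)).sub ((hlcont e').comp (by continuity))
    have h0 : (0:ℝ) < l e (f e - 0) - l e' (f e' + 0) := by
      simp only [sub_zero, add_zero]; linarith
    have hev : ∀ᶠ t in nhds (0:ℝ), 0 < l e (f e - t) - l e' (f e' + t) :=
      ContinuousAt.eventually_lt continuousAt_const hφ.continuousAt h0
    obtain ⟨δ, hδ, hball⟩ := Metric.eventually_nhds_iff.mp hev
    set ε := min (δ / 2) (f e) with hε
    have hεpos : 0 < ε := lt_min (by linarith) he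
    have hεle : ε ≤ f e := min_le_right _ _
    have hεδ : dist ε (0:ℝ) < δ := by
      rw [Real.dist_eq, sub_zero, abs_of_pos hεpos]
      calc ε ≤ δ / 2 := min_le_left _ _
        _ < δ := by linarith
    have hεlt : 0 < l e (f e - ε) - l e' (f e' + ε) := hball hεδ
    -- perturbed flow
    set g : E → ℝ := Function.update (Function.update f e (f e - ε)) e' (f e' + ε) with hg
    have hge : g e = f e - ε := by
      rw [hg, Function.update_of_ne hne, Function.update_self]
    have hge' : g e' = f e' + ε := by rw [hg, Function.update_self]
    have hgx : ∀ x, x ≠ e → x ≠ e' → g x = f x := by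
      intro x hx hx'
      rw [hg, Function.update_of_ne hx', Function.update_of_ne hx]
    have hg0 : ∀ x, 0 ≤ g x := by
      intro x
      by_cases hx : x = e'
      · rw [hx, hge']; linarith [hf0 e', hεpos.le]
      by_cases hx2 : x = e
      · rw [hx2, hge]; linarith
      · rw [hgx x hx2 hx]; exact hf0 x
    have hgr : ∑ x, g x = r := by
      have : ∀ x ∈ Finset.univ, x ∉ ({e, e'} : Finset E) → g x - f x = 0 := by
        intro x _ hx
        simp only [Finset.mem_insert, Finset.mem_singleton, not_or] at hx
        rw [hgx x hx.1 hx.2, sub_self]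
      have hdiff : ∑ x, (g x - f x) = ∑ x ∈ ({e, e'} : Finset E), (g x - f x) :=
        (Finset.sum_subset (Finset.subset_univ _) this).symm
      rw [Finset.sum_pair hne, hge, hge'] at hdiff
      have : ∑ x, (g x - f x) = 0 := by rw [hdiff]; ring
      rw [Finset.sum_sub_distrib, hfr] at this
      linarith
    -- Φ(g) < Φ(f)
    have hΦ := hmin g hg0 hgr
    have hdiff : ∑ x, (∫ u in (0:ℝ)..(g x), l x u) - ∑ x, (∫ u in (0:ℝ)..(f x), l x u)
        = ((∫ u in (0:ℝ)..(g e), l e u) - ∫ u in (0:ℝ)..(f e), l e u)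
          + ((∫ u in (0:ℝ)..(g e'), l e' u) - ∫ u in (0:ℝ)..(f e'), l e' u) := by
      rw [← Finset.sum_sub_distrib]
      have : ∀ x ∈ Finset.univ, x ∉ ({e, e'} : Finset E) →
          (∫ u in (0:ℝ)..(g x), l x u) - (∫ u in (0:ℝ)..(f x), l x u) = 0 := by
        intro x _ hx
        simp only [Finset.mem_insert, Finset.mem_singleton, not_or] at hx
        rw [hgx x hx.1 hx.2, sub_self]
      rw [← Finset.sum_subset (Finset.subset_univ _) this, Finset.sum_pair hne]
    have hInte : (∫ u in (0:ℝ)..(g e), l e u) - (∫ u in (0:ℝ)..(f e), l e u)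
        = -∫ u in (f e - ε)..(f e), l e u := by
      have := intervalIntegral.integral_add_adjacent_intervals (μ := MeasureTheory.volume)
        ((hlcont e).intervalIntegrable 0 (f e - ε)) ((hlcont e).intervalIntegrable (f e - ε) (f e))
      rw [hge]; linarith
    have hInte' : (∫ u in (0:ℝ)..(g e'), l e' u) - (∫ u in (0:ℝ)..(f e'), l e' u)
        = ∫ u in (f e')..(f e' + ε), l e' u := by
      have := intervalIntegral.integral_add_adjacent_intervals (μ := MeasureTheory.volume)
        ((hlcont e').intervalIntegrable 0 (f e')) ((hlcont e').intervalIntegrable (f e') (f e' + ε))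
      rw [hge']; linarith
    have hb1 : ε * l e (f e - ε) ≤ ∫ u in (f e - ε)..(f e), l e u := by
      have := int_ge_left (hlcont e) (hlmono e) (f e - ε) (f e)
      have h' : f e - (f e - ε) = ε := by ring
      rw [h'] at this; exact this
    have hb2 : (∫ u in (f e')..(f e' + ε), l e' u) ≤ ε * l e' (f e' + ε) := by
      have := int_le_right (hlcont e') (hlmono e') (a := f e') (b := f e' + ε) (by linarith)
      have h' : f e' + ε - f e' = ε := by ring
      rw [h'] at this; exact this
    have : ε * l e' (f e' + ε) < ε * l e (f e - ε) :=
      (mul_lt_mul_iff_right₀ hεpos).mpr (by linarith)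
    linarith [hΦ, hdiff, hInte, hInte', hb1, hb2, this]
end
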